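/- arXiv:1909.13202 — 7 statements merged into one kernel-verified Lean document; each statement's English description precedes it below -/
import Mathlib

section
/- Equality rank(ABC) + rank(B) = rank(AB) + rank(BC) holds if and only if the induced linear map T : Rg(B)/Rg(BC) → Rg(AB)/Rg(ABC) on quotient spaces, defined by T([x]) = [Ax], is injective (equivalently, an isomorphism). -/
/-!
`T` is always surjective: every class in `Rg(AB)/Rg(ABC)` is represented by some `ABv`, the image
of the class of `Bv`. A surjective map between finite-dimensional spaces is injective exactly when
the dimensions agree, and by rank–nullity these dimensions are `rank B - rank BC` and
`rank AB - rank ABC`.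
-/

open Module Function

section Quotient

variable {R K V W : Type*}

theorem Submodule.surjective_of_le_map_of_apply_mk [Ring R] [AddCommGroup V] [Module R V]
    [AddCommGroup W] [Module R W] {M : Submodule R V} {N : Submodule R W} (g : V →ₗ[R] W)
    (hN : N ≤ M.map g) {P : Submodule R M} {Q : Submodule R N} (T : (M ⧸ P) →ₗ[R] N ⧸ Q)
    (hT : ∀ (x : M) (hx : g x ∈ N), T (Submodule.Quotient.mk x) = Submodule.Quotient.mk ⟨g x, hx⟩) :
    Surjective T := by
  intro y
  obtain ⟨⟨w, hw⟩, rfl⟩ := Submodule.Quotient.mk_surjective _ y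
  obtain ⟨x, hx, rfl⟩ := hN hw
  exact ⟨Submodule.Quotient.mk ⟨x, hx⟩, hT _ _⟩

variable [DivisionRing K] [AddCommGroup V] [Module K V] [AddCommGroup W] [Module K W]

theorem Submodule.finrank_quotient_comap_subtype_add_finrank {M N : Submodule K V}
    [FiniteDimensional K M] (h : N ≤ M) :
    finrank K (M ⧸ N.comap M.subtype) + finrank K N = finrank K M := by
  rw [← (Submodule.comapSubtypeEquivOfLe h).finrank_eq]
  exact Submodule.finrank_quotient_add_finrank _

theorem LinearMap.injective_iff_finrank_eq_finrank_of_surjective [FiniteDimensional K V]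
    [FiniteDimensional K W] {f : V →ₗ[K] W} (hf : Surjective f) :
    Injective f ↔ finrank K V = finrank K W :=
  ⟨fun hinj ↦ (LinearEquiv.ofBijective f ⟨hinj, hf⟩).finrank_eq,
    fun h ↦ (LinearMap.injective_iff_surjective_of_finrank_eq_finrank h).2 hf⟩

end Quotient

section Matrix

variable {l m n R : Type*} [CommSemiring R] [Fintype m] [Fintype n]

theorem Matrix.range_mulVecLin_mul (A : Matrix l m R) (B : Matrix m n R) :
    LinearMap.range (A * B).mulVecLin = (LinearMap.range B.mulVecLin).map A.mulVecLin := by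
  rw [Matrix.mulVecLin_mul, LinearMap.range_comp]

theorem Matrix.range_mulVecLin_mul_le (A : Matrix l m R) (B : Matrix m n R) :
    LinearMap.range (A * B).mulVecLin ≤ LinearMap.range A.mulVecLin := by
  rw [Matrix.mulVecLin_mul]
  exact LinearMap.range_comp_le_range _ _

end Matrix

/-- Equality `rank(ABC) + rank(B) = rank(AB) + rank(BC)` holds if and only if
the induced linear map `T : Rg(B)/Rg(BC) → Rg(AB)/Rg(ABC)`, `T([x]) = [Ax]`,
is injective. -/
theorem frobenius_rank_eq_iff_induced_map_injective {F : Type*} [Field F]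
    {m n p q : ℕ}
    (A : Matrix (Fin m) (Fin n) F) (B : Matrix (Fin n) (Fin p) F)
    (C : Matrix (Fin p) (Fin q) F)
    (T : (↥(LinearMap.range B.mulVecLin) ⧸
            Submodule.comap (LinearMap.range B.mulVecLin).subtype
              (LinearMap.range (B * C).mulVecLin)) →ₗ[F]
         (↥(LinearMap.range (A * B).mulVecLin) ⧸
            Submodule.comap (LinearMap.range (A * B).mulVecLin).subtype
              (LinearMap.range (A * B * C).mulVecLin)))
    (hT : ∀ (x : ↥(LinearMap.range B.mulVecLin))
        (hx : A.mulVec (x : Fin n → F) ∈ LinearMap.range (A * B).mulVecLin),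
        T (Submodule.Quotient.mk x) =
          Submodule.Quotient.mk ⟨A.mulVec (x : Fin n → F), hx⟩) :
    (A * B * C).rank + B.rank = (A * B).rank + (B * C).rank ↔
      Function.Injective T := by
  have hT_surj : Surjective T :=
    Submodule.surjective_of_le_map_of_apply_mk A.mulVecLin (Matrix.range_mulVecLin_mul A B).le T hT
  have hB := Submodule.finrank_quotient_comap_subtype_add_finrank
    (Matrix.range_mulVecLin_mul_le B C)
  have hAB := Submodule.finrank_quotient_comap_subtype_add_finrank
    (Matrix.range_mulVecLin_mul_le (A * B) C)
  rw [LinearMap.injective_iff_finrank_eq_finrank_of_surjective hT_surj]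
  simp only [Matrix.rank]
  omega
end

section
/- Let n₁ = rank(B), n₂ = rank(AB), m₁ = rank(BC), m₂ = rank(ABC). Let b₁ = (u₁, …, u_{n₁}) be a basis of Rg(B) whose first m₁ vectors u₁, …, u_{m₁} form a basis of Rg(BC), and let b₂ = (w₁, …, w_{n₂}) be a basis of Rg(AB) whose first m₂ vectors w₁, …, w_{m₂} form a basis of Rg(ABC). Let L_A : Rg(B) → Rg(AB) be the linear map L_A(x) = Ax, and let M be its matrix representation with respect to b₁ and b₂. Then rank(ABC) + rank(B) = rank(AB) + rank(BC) holds if and only if the lower right block of M, consisting of the entries M_{ij} with m₂ < i ≤ n₂ and m₁ < j ≤ n₁, represents a bijective linear map (i.e., it is a square invertible matrix). -/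
/-!
`L_A` maps `Rg(B)` onto `Rg(AB)` and `Rg(BC)` into `Rg(ABC)`, so `M` is block upper triangular
and its lower right block `D` (the matrix of the induced map `Rg(B)/Rg(BC) → Rg(AB)/Rg(ABC)`)
is surjective. A surjective matrix is bijective iff it is square, and `D` is square iff
`rank(B) - rank(BC) = rank(AB) - rank(ABC)`.
-/

open Function

namespace Matrix

variable {R ι κ ι' κ' : Type*}

theorem submatrix_mulVec_comp [NonUnitalNonAssocSemiring R] [Fintype κ] [Fintype κ']
    (M : Matrix ι κ R) {r : ι' → ι} {c : κ' → κ} (hc : Injective c)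
    (hM : ∀ i j, j ∉ Set.range c → M (r i) j = 0) (x : κ → R) :
    M.submatrix r c *ᵥ (x ∘ c) = (M *ᵥ x) ∘ r := by
  ext i
  exact Fintype.sum_of_injective c hc _ _ (fun j hj => by simp [hM i j hj]) (fun _ => rfl)

theorem surjective_submatrix_mulVecLin [CommSemiring R] [Fintype κ] [Fintype κ']
    {M : Matrix ι κ R} (hM : Surjective M.mulVecLin) {r : ι' → ι} {c : κ' → κ}
    (hr : Injective r) (hc : Injective c) (hMz : ∀ i j, j ∉ Set.range c → M (r i) j = 0) :
    Surjective (M.submatrix r c).mulVecLin := by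
  intro y
  obtain ⟨z, hz⟩ := hr.surjective_comp_right' (0 : ι → R) y
  obtain ⟨x, rfl⟩ := hM z
  exact ⟨x ∘ c, (M.submatrix_mulVec_comp hc hMz x).trans hz⟩

theorem bijective_mulVecLin_iff_card_eq {K : Type*} [Field K] [Fintype κ] [Fintype ι]
    {M : Matrix ι κ K} (hM : Surjective M.mulVecLin) :
    Bijective M.mulVecLin ↔ Fintype.card κ = Fintype.card ι := by
  refine ⟨fun h => by simpa using (LinearEquiv.ofBijective _ h).finrank_eq, fun h => ?_⟩
  exact ⟨(LinearMap.injective_iff_surjective_of_finrank_eq_finrank (by simpa using h)).2 hM, hM⟩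

theorem range_mulVecLin_mul_s5 [CommSemiring R] [Fintype κ] {μ : Type*} [Fintype μ]
    (A : Matrix ι κ R) (B : Matrix κ μ R) :
    LinearMap.range (A * B).mulVecLin = (LinearMap.range B.mulVecLin).map A.mulVecLin := by
  rw [mulVecLin_mul, LinearMap.range_comp]

end Matrix

namespace Submodule

variable {R M ι : Type*} [Semiring R] [AddCommMonoid M] [Module R M]

theorem mem_span_range_of_coe_mem {q : Submodule R M} {v : ι → q} {x : q}
    (hx : (x : M) ∈ span R (Set.range fun i => (v i : M))) : x ∈ span R (Set.range v) := by
  have hrange : (Set.range fun i => (v i : M)) = q.subtype '' Set.range v := Set.range_comp _ _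
  rw [hrange, span_image] at hx
  obtain ⟨y, hy, hyx⟩ := hx
  rwa [← Subtype.coe_injective hyx]

end Submodule

namespace LinearMap

variable {R M N : Type*} [CommSemiring R] [AddCommMonoid M] [Module R M]
  [AddCommMonoid N] [Module R N]

section

variable {ι κ : Type*} [Fintype ι] [DecidableEq ι] [Fintype κ]
  (b₁ : Module.Basis ι R M) (b₂ : Module.Basis κ R N)

theorem surjective_toMatrix_mulVecLin {f : M →ₗ[R] N} (hf : Surjective f) :
    Surjective (toMatrix b₁ b₂ f).mulVecLin := by
  intro y
  obtain ⟨v, hv⟩ := hf (b₂.equivFun.symm y)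
  refine ⟨b₁.repr v, ?_⟩
  rw [Matrix.mulVecLin_apply, toMatrix_mulVec_repr, hv, ← Module.Basis.equivFun_apply,
    LinearEquiv.apply_symm_apply]

theorem toMatrix_apply_eq_zero_of_mem_span_image {f : M →ₗ[R] N} {s : Set κ} {i : κ} {j : ι}
    (hf : f (b₁ j) ∈ Submodule.span R (b₂ '' s)) (hi : i ∉ s) : toMatrix b₁ b₂ f i j = 0 := by
  rw [toMatrix_apply]
  by_contra h
  exact hi (b₂.mem_span_image.1 hf (Finsupp.mem_support_iff.2 h))

end

theorem toMatrix_eq_zero_of_castLE_mapsTo {n₁ n₂ m₁ m₂ : ℕ} (hle₁ : m₁ ≤ n₁) (hle₂ : m₂ ≤ n₂)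
    (b₁ : Module.Basis (Fin n₁) R M) (b₂ : Module.Basis (Fin n₂) R N) {f : M →ₗ[R] N}
    (hf : ∀ j : Fin m₁,
      f (b₁ (Fin.castLE hle₁ j)) ∈ Submodule.span R (Set.range (b₂ ∘ Fin.castLE hle₂)))
    {i : Fin n₂} {j : Fin n₁} (hi : m₂ ≤ i) (hj : j < m₁) : toMatrix b₁ b₂ f i j = 0 := by
  refine toMatrix_apply_eq_zero_of_mem_span_image b₁ b₂ (s := Set.range (Fin.castLE hle₂)) ?_ ?_
  · rw [← Set.range_comp]
    exact hf ⟨j, hj⟩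
  · rintro ⟨k, rfl⟩
    exact absurd hi (not_le.2 k.isLt)

end LinearMap

/-- Let `n₁ = rank B`, `n₂ = rank AB`, `m₁ = rank BC`, `m₂ = rank ABC`. Let `b₁`
be a basis of `Rg(B)` whose first `m₁` vectors form a basis of `Rg(BC)` and `b₂`
a basis of `Rg(AB)` whose first `m₂` vectors form a basis of `Rg(ABC)`. Let
`L_A : Rg(B) → Rg(AB)` be `x ↦ Ax` and `M` its matrix with respect to `b₁, b₂`.
Then `rank(ABC) + rank(B) = rank(AB) + rank(BC)` iff the lower-right
`(n₂ - m₂) × (n₁ - m₁)` block of `M` represents a bijective linear map. -/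
theorem frobenius_rank_eq_iff_lower_right_block_bijective {F : Type*} [Field F]
    {m n p q : ℕ}
    (A : Matrix (Fin m) (Fin n) F) (B : Matrix (Fin n) (Fin p) F)
    (C : Matrix (Fin p) (Fin q) F)
    {n₁ n₂ m₁ m₂ : ℕ}
    (hn₁ : n₁ = B.rank) (hn₂ : n₂ = (A * B).rank)
    (hm₁ : m₁ = (B * C).rank) (hm₂ : m₂ = (A * B * C).rank)
    (hle₁ : m₁ ≤ n₁) (hle₂ : m₂ ≤ n₂)
    (b₁ : Module.Basis (Fin n₁) F ↥(LinearMap.range B.mulVecLin))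
    (b₂ : Module.Basis (Fin n₂) F ↥(LinearMap.range (A * B).mulVecLin))
    (hb₁ : Submodule.span F
        (Set.range fun i : Fin m₁ => ((b₁ (Fin.castLE hle₁ i) : _) : Fin n → F))
        = LinearMap.range (B * C).mulVecLin)
    (hb₂ : Submodule.span F
        (Set.range fun i : Fin m₂ => ((b₂ (Fin.castLE hle₂ i) : _) : Fin m → F))
        = LinearMap.range (A * B * C).mulVecLin)
    (L_A : ↥(LinearMap.range B.mulVecLin) →ₗ[F]
            ↥(LinearMap.range (A * B).mulVecLin))
    (hL : ∀ x : ↥(LinearMap.range B.mulVecLin),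
        ((L_A x : _) : Fin m → F) = A.mulVec (x : Fin n → F)) :
    (A * B * C).rank + B.rank = (A * B).rank + (B * C).rank ↔
      Function.Bijective
        (((LinearMap.toMatrix b₁ b₂ L_A).submatrix
            (fun i : Fin (n₂ - m₂) => (⟨m₂ + (i : ℕ), by omega⟩ : Fin n₂))
            (fun j : Fin (n₁ - m₁) => (⟨m₁ + (j : ℕ), by omega⟩ : Fin n₁))).mulVecLin) := by
  have hL_surj : Surjective L_A := by
    rintro ⟨w, hw⟩
    rw [Matrix.range_mulVecLin_mul_s5] at hw
    obtain ⟨x, hx, rfl⟩ := hw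
    exact ⟨⟨x, hx⟩, Subtype.ext (hL _)⟩
  have hL_mapsTo : ∀ j : Fin m₁, L_A (b₁ (Fin.castLE hle₁ j)) ∈
      Submodule.span F (Set.range (b₂ ∘ Fin.castLE hle₂)) := by
    intro j
    have hBC : (b₁ (Fin.castLE hle₁ j) : Fin n → F) ∈ LinearMap.range (B * C).mulVecLin :=
      hb₁ ▸ Submodule.subset_span ⟨j, rfl⟩
    have hABC : (L_A (b₁ (Fin.castLE hle₁ j)) : Fin m → F) ∈
        LinearMap.range (A * B * C).mulVecLin := by
      rw [hL, Matrix.mul_assoc, Matrix.range_mulVecLin_mul_s5]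
      exact Submodule.mem_map_of_mem hBC
    exact Submodule.mem_span_range_of_coe_mem (hb₂ ▸ hABC)
  have hlower_left : ∀ (i : Fin (n₂ - m₂)) (j : Fin n₁),
      j ∉ Set.range (fun j : Fin (n₁ - m₁) => (⟨m₁ + (j : ℕ), by omega⟩ : Fin n₁)) →
      LinearMap.toMatrix b₁ b₂ L_A ⟨m₂ + (i : ℕ), by omega⟩ j = 0 := by
    intro i j hj
    refine LinearMap.toMatrix_eq_zero_of_castLE_mapsTo hle₁ hle₂ b₁ b₂ hL_mapsTo
      (Nat.le_add_right _ _) ?_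
    by_contra! h
    exact hj ⟨⟨j - m₁, by omega⟩, Fin.ext (Nat.add_sub_of_le h)⟩
  have hblock := Matrix.surjective_submatrix_mulVecLin
    (LinearMap.surjective_toMatrix_mulVecLin b₁ b₂ hL_surj)
    (fun _ _ h => Fin.ext (by simpa using h)) (fun _ _ h => Fin.ext (by simpa using h))
    hlower_left
  rw [Matrix.bijective_mulVecLin_iff_card_eq hblock, Fintype.card_fin, Fintype.card_fin]
  omega
end

section
/- Equality rank(ABC) + rank(B) = rank(AB) + rank(BC) holds if and only if Rg(B) ∩ Ker(A) = Rg(BC) ∩ Ker(A). -/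
/-! Rank–nullity for `A` restricted to a column space `Rg(M)` gives
`rank(AM) + dim(Rg(M) ∩ Ker(A)) = rank(M)`. Applied to `M = B` and `M = BC` it turns the rank
equation into `dim(Rg(B) ∩ Ker(A)) = dim(Rg(BC) ∩ Ker(A))`, and since `Rg(BC) ⊆ Rg(B)` the
two subspaces are nested, so equal dimension means equality. -/

open Submodule LinearMap

theorem Submodule.finrank_map_add_finrank_inf_ker {K V W : Type*} [DivisionRing K]
    [AddCommGroup V] [Module K V] [AddCommGroup W] [Module K W]
    (f : V →ₗ[K] W) (p : Submodule K V) [FiniteDimensional K p] :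
    Module.finrank K (p.map f) + Module.finrank K (p ⊓ ker f : Submodule K V) =
      Module.finrank K p := by
  rw [← (f.domRestrict p).finrank_range_add_finrank_ker, range_domRestrict, ker_domRestrict,
    ← finrank_map_subtype_eq p, map_comap_subtype]

theorem Matrix.rank_mul_add_finrank_range_inf_ker {F l m n : Type*} [Field F] [Fintype m]
    [Fintype n] (A : Matrix l m F) (M : Matrix m n F) :
    (A * M).rank + Module.finrank F (range M.mulVecLin ⊓ ker A.mulVecLin : Submodule F (m → F)) =
      M.rank := by
  rw [Matrix.rank, Matrix.mulVecLin_mul, range_comp, finrank_map_add_finrank_inf_ker, Matrix.rank]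

theorem Matrix.range_mulVecLin_mul_le_s6 {F l m n : Type*} [Field F] [Fintype m] [Fintype n]
    (B : Matrix l m F) (C : Matrix m n F) :
    range (B * C).mulVecLin ≤ range B.mulVecLin := by
  rw [Matrix.mulVecLin_mul]
  exact range_comp_le_range _ _

/-- Equality `rank(ABC) + rank(B) = rank(AB) + rank(BC)` holds if and only if
`Rg(B) ∩ Ker(A) = Rg(BC) ∩ Ker(A)`. -/
theorem frobenius_rank_eq_iff_inter_ker_eq {F : Type*} [Field F] {m n p q : ℕ}
    (A : Matrix (Fin m) (Fin n) F) (B : Matrix (Fin n) (Fin p) F)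
    (C : Matrix (Fin p) (Fin q) F) :
    (A * B * C).rank + B.rank = (A * B).rank + (B * C).rank ↔
      LinearMap.range B.mulVecLin ⊓ LinearMap.ker A.mulVecLin =
        LinearMap.range (B * C).mulVecLin ⊓ LinearMap.ker A.mulVecLin := by
  have hB := A.rank_mul_add_finrank_range_inf_ker B
  have hBC := A.rank_mul_add_finrank_range_inf_ker (B * C)
  rw [← Matrix.mul_assoc] at hBC
  have hle : range (B * C).mulVecLin ⊓ ker A.mulVecLin ≤ range B.mulVecLin ⊓ ker A.mulVecLin :=
    inf_le_inf_right _ (B.range_mulVecLin_mul_le_s6 C)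
  constructor
  · intro h
    exact (eq_of_le_of_finrank_eq hle (by omega)).symm
  · intro h
    rw [h] at hB
    omega
end

section
/- Suppose D_B·V_B is a matrix whose column space equals Rg(B) ∩ Ker(A), and D_{BC}·V_{BC} is a matrix whose column space equals Rg(BC) ∩ Ker(A). Then rank(ABC) + rank(B) = rank(AB) + rank(BC) holds if and only if there exists a matrix Z such that D_B·V_B = (D_{BC}·V_{BC})·Z. -/
/-!
By rank–nullity for `A` restricted to a column space, `rank (A M) + dim (Rg M ∩ Ker A) = rank M`.
Applied to `M = B` and `M = BC`, the rank identity becomes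
`dim (Rg B ∩ Ker A) = dim (Rg BC ∩ Ker A)`. Since `Rg BC ∩ Ker A ⊆ Rg B ∩ Ker A`, this equality of
dimensions says the two spaces coincide, i.e. every column of `D_B·V_B` is a combination of the
columns of `D_BC·V_BC`, which is the factorisation `D_B·V_B = (D_BC·V_BC)·Z`.
-/

open LinearMap

theorem LinearMap.finrank_range_comp_add_finrank_range_inf_ker {K V W U : Type*} [DivisionRing K]
    [AddCommGroup V] [Module K V] [AddCommGroup W] [Module K W] [AddCommGroup U] [Module K U]
    [FiniteDimensional K W] (f : V →ₗ[K] W) (g : W →ₗ[K] U) :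
    Module.finrank K (range (g ∘ₗ f)) + Module.finrank K ↥(range f ⊓ ker g) =
      Module.finrank K (range f) := by
  rw [← Submodule.map_comap_subtype, Submodule.finrank_map_subtype_eq, range_comp,
    ← range_domRestrict, ← ker_domRestrict]
  exact finrank_range_add_finrank_ker _

namespace Matrix

variable {K : Type*} [Field K] {l m n o : Type*} [Fintype m] [Fintype n] [Fintype o]

theorem rank_mul_add_finrank_range_inf_ker_s9 (A : Matrix l m K) (B : Matrix m n K) :
    (A * B).rank + Module.finrank K ↥(range B.mulVecLin ⊓ ker A.mulVecLin) = B.rank := by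
  rw [rank, mulVecLin_mul]
  exact finrank_range_comp_add_finrank_range_inf_ker B.mulVecLin A.mulVecLin

theorem range_mulVecLin_le_iff_exists_eq_mul (M : Matrix l n K) (N : Matrix l o K) :
    range M.mulVecLin ≤ range N.mulVecLin ↔ ∃ Z : Matrix o n K, M = N * Z := by
  constructor
  · intro hle
    have hcol : ∀ j, ∃ z : o → K, N *ᵥ z = M.col j := fun j => by
      apply hle
      rw [range_mulVecLin]
      exact Submodule.subset_span ⟨j, rfl⟩
    choose z hz using hcol
    refine ⟨(of z)ᵀ, ?_⟩
    ext i j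
    rw [← col_apply M j i, ← hz j]
    rfl
  · rintro ⟨Z, rfl⟩
    rw [mulVecLin_mul, range_comp]
    exact map_le_range

end Matrix

/-- If the column space of `D_B·V_B` equals `Rg(B) ∩ Ker(A)` and the column
space of `D_BC·V_BC` equals `Rg(BC) ∩ Ker(A)`, then
`rank(ABC) + rank(B) = rank(AB) + rank(BC)` holds if and only if
`D_B·V_B = (D_BC·V_BC)·Z` for some matrix `Z`. -/
theorem frobenius_rank_eq_iff_exists_factor {F : Type*} [Field F]
    {m n p q s t : ℕ}
    (A : Matrix (Fin m) (Fin n) F) (B : Matrix (Fin n) (Fin p) F)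
    (C : Matrix (Fin p) (Fin q) F)
    (DV_B : Matrix (Fin n) (Fin s) F) (DV_BC : Matrix (Fin n) (Fin t) F)
    (hB : LinearMap.range DV_B.mulVecLin =
        LinearMap.range B.mulVecLin ⊓ LinearMap.ker A.mulVecLin)
    (hBC : LinearMap.range DV_BC.mulVecLin =
        LinearMap.range (B * C).mulVecLin ⊓ LinearMap.ker A.mulVecLin) :
    (A * B * C).rank + B.rank = (A * B).rank + (B * C).rank ↔
      ∃ Z : Matrix (Fin t) (Fin s) F, DV_B = DV_BC * Z := by
  have hrank_B := Matrix.rank_mul_add_finrank_range_inf_ker_s9 A B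
  have hrank_BC := Matrix.rank_mul_add_finrank_range_inf_ker_s9 A (B * C)
  rw [← hB] at hrank_B
  rw [← hBC, ← Matrix.mul_assoc] at hrank_BC
  have hle : range DV_BC.mulVecLin ≤ range DV_B.mulVecLin := by
    rw [hB, hBC]
    exact inf_le_inf_right _ ((Matrix.range_mulVecLin_le_iff_exists_eq_mul _ _).2 ⟨C, rfl⟩)
  rw [← Matrix.range_mulVecLin_le_iff_exists_eq_mul]
  constructor
  · intro hrank
    exact (Submodule.eq_of_le_of_finrank_eq hle (by omega)).ge
  · intro hge
    have hdim_le := Submodule.finrank_mono hge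
    have hdim_ge := Submodule.finrank_mono hle
    omega
end

section
/- If there exist matrices X ∈ M_{q,p}(𝔽) and Y ∈ M_{n,m}(𝔽) such that B = BCX + YAB, then rank(ABC) + rank(B) = rank(AB) + rank(BC). -/
/-!
Let `U = im B` and `V = im (BC) ≤ U`. Then `rank (AB) = dim A(U)` and `rank (ABC) = dim A(V)`,
so by rank–nullity for `A` restricted to `U` and to `V` the identity amounts to
`ker A ∩ U = ker A ∩ V`. The equation `B = BCX + YAB` gives exactly this: if `ABx = 0` then
`Bx = BC(Xx)`.
-/

open Module LinearMap

namespace Submodule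

variable {K V W : Type*} [DivisionRing K] [AddCommGroup V] [Module K V] [AddCommGroup W]
  [Module K W] [FiniteDimensional K V]

theorem finrank_map_add_finrank_ker_inf (f : V →ₗ[K] W) (U : Submodule K V) :
    finrank K (U.map f) + finrank K (ker f ⊓ U : Submodule K V) = finrank K U := by
  have h := finrank_range_add_finrank_ker (f.domRestrict U)
  rwa [range_domRestrict, ker_domRestrict, ← finrank_map_subtype_eq, map_comap_subtype,
    inf_comm] at h

theorem finrank_map_add_finrank_eq_of_ker_inf_le (f : V →ₗ[K] W) {U U' : Submodule K V}
    (hle : U' ≤ U) (hker : ker f ⊓ U ≤ U') :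
    finrank K (U'.map f) + finrank K U = finrank K (U.map f) + finrank K U' := by
  have hker_eq : ker f ⊓ U = ker f ⊓ U' := le_antisymm (le_inf inf_le_left hker)
    (inf_le_inf_left _ hle)
  have hU := finrank_map_add_finrank_ker_inf f U
  have hU' := finrank_map_add_finrank_ker_inf f U'
  rw [hker_eq] at hU
  omega

end Submodule

namespace Matrix

variable {l m n o R : Type*} [Fintype n] [CommRing R]

theorem rank_mul_eq_finrank_map [Fintype m] (A : Matrix l m R) (B : Matrix m n R) :
    (A * B).rank = finrank R ((range B.mulVecLin).map A.mulVecLin) := by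
  rw [rank, mulVecLin_mul, range_comp]

theorem range_mulVecLin_mul_le_s10 [Fintype o] (B : Matrix m n R) (C : Matrix n o R) :
    range (B * C).mulVecLin ≤ range B.mulVecLin := by
  rw [mulVecLin_mul]
  exact range_comp_le_range _ _

theorem ker_inf_range_le_range_mul_of_eq_add [Fintype l] [Fintype m] [Fintype o]
    {A : Matrix l m R} {B : Matrix m n R} {C : Matrix n o R} {X : Matrix o n R}
    {Y : Matrix m l R} (hB : B = B * C * X + Y * (A * B)) :
    ker A.mulVecLin ⊓ range B.mulVecLin ≤ range (B * C).mulVecLin := by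
  rintro _ ⟨hA, x, rfl⟩
  have hABx : (A * B) *ᵥ x = 0 := by rwa [← mulVec_mulVec]
  refine ⟨X *ᵥ x, ?_⟩
  calc (B * C) *ᵥ (X *ᵥ x) = (B * C * X) *ᵥ x + (Y * (A * B)) *ᵥ x := by
        rw [mulVec_mulVec, ← mulVec_mulVec x Y, hABx, mulVec_zero, add_zero]
    _ = B *ᵥ x := by rw [← add_mulVec, ← hB]

end Matrix

open Matrix in
/-- If `B = BCX + YAB` for some matrices `X` and `Y`, then
`rank(ABC) + rank(B) = rank(AB) + rank(BC)`. -/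
theorem frobenius_rank_eq_of_solvable {F : Type*} [Field F] {m n p q : ℕ}
    (A : Matrix (Fin m) (Fin n) F) (B : Matrix (Fin n) (Fin p) F)
    (C : Matrix (Fin p) (Fin q) F)
    (h : ∃ (X : Matrix (Fin q) (Fin p) F) (Y : Matrix (Fin n) (Fin m) F),
        B = B * C * X + Y * (A * B)) :
    (A * B * C).rank + B.rank = (A * B).rank + (B * C).rank := by
  obtain ⟨X, Y, hB⟩ := h
  rw [Matrix.mul_assoc, rank_mul_eq_finrank_map, rank_mul_eq_finrank_map]
  exact Submodule.finrank_map_add_finrank_eq_of_ker_inf_le A.mulVecLin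
    (range_mulVecLin_mul_le_s10 B C) (ker_inf_range_le_range_mul_of_eq_add hB)
end

section
/- If rank(ABC) + rank(B) = rank(AB) + rank(BC), then there exist matrices X ∈ M_{q,p}(𝔽) and Y ∈ M_{n,m}(𝔽) such that B = BCX + YAB. -/
/-!
Rank–nullity for `A` restricted to `range B` and to `range (BC)` turns the rank equation into
`ker A ⊓ range B = ker A ⊓ range (BC)`. If `Z` is a generalized inverse of `AB`, i.e.
`AB Z AB = AB`, then `B - BZAB` has range inside `ker A ⊓ range B`, hence inside `range (BC)`,
so it factors as `BCX`; take `Y = BZ`.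
-/

open Module LinearMap

section

variable {K V₁ V₂ V₃ V₄ : Type*} [DivisionRing K]
  [AddCommGroup V₁] [Module K V₁] [AddCommGroup V₂] [Module K V₂]
  [AddCommGroup V₃] [Module K V₃] [AddCommGroup V₄] [Module K V₄]

theorem LinearMap.exists_comp_comp_eq_self (f : V₁ →ₗ[K] V₂) :
    ∃ g : V₂ →ₗ[K] V₁, f ∘ₗ g ∘ₗ f = f := by
  obtain ⟨s, hs⟩ := f.rangeRestrict.exists_rightInverse_of_surjective f.range_rangeRestrict
  obtain ⟨r, hr⟩ := (range f).subtype.exists_leftInverse_of_injective (range f).ker_subtype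
  refine ⟨s ∘ₗ r, ?_⟩
  calc f ∘ₗ (s ∘ₗ r) ∘ₗ f
      = (range f).subtype ∘ₗ (f.rangeRestrict ∘ₗ s) ∘ₗ (r ∘ₗ (range f).subtype) ∘ₗ
          f.rangeRestrict := rfl
    _ = f := by rw [hs, hr]; rfl

theorem LinearMap.exists_comp_eq_of_range_le {f : V₁ →ₗ[K] V₃} {g : V₂ →ₗ[K] V₃}
    (h : range f ≤ range g) : ∃ x : V₁ →ₗ[K] V₂, g ∘ₗ x = f := by
  obtain ⟨x, hx⟩ := Module.projective_lifting_property g.rangeRestrict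
    (f.codRestrict (range g) fun v => h (mem_range_self f v)) g.surjective_rangeRestrict
  exact ⟨x, ext fun v => congr($(congr($hx v)).1)⟩

theorem Submodule.finrank_map_add_finrank_ker_inf_s11 (f : V₁ →ₗ[K] V₂) (W : Submodule K V₁)
    [FiniteDimensional K W] :
    finrank K (W.map f) + finrank K ↥(ker f ⊓ W) = finrank K W := by
  have hker : ker (f.domRestrict W) = (ker f ⊓ W).comap W.subtype := by
    rw [ker_domRestrict, Submodule.comap_inf, Submodule.comap_subtype_self, inf_top_eq]
  rw [← (f.domRestrict W).finrank_range_add_finrank_ker, range_domRestrict, hker,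
    (Submodule.comapSubtypeEquivOfLe inf_le_right).finrank_eq]

theorem Submodule.ker_inf_le_of_finrank_map_add_eq (f : V₁ →ₗ[K] V₂) {W' W : Submodule K V₁}
    [FiniteDimensional K W] (hle : W' ≤ W)
    (h : finrank K (W'.map f) + finrank K W = finrank K (W.map f) + finrank K W') :
    ker f ⊓ W ≤ W' := by
  have : FiniteDimensional K W' := Submodule.finiteDimensional_of_le hle
  have hW := W.finrank_map_add_finrank_ker_inf_s11 f
  have hW' := W'.finrank_map_add_finrank_ker_inf_s11 f
  have heq : ker f ⊓ W' = ker f ⊓ W :=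
    Submodule.eq_of_le_of_finrank_le (inf_le_inf_left _ hle) (by omega)
  exact heq ▸ inf_le_right

theorem LinearMap.exists_eq_comp_add_comp_of_finrank_range_eq [FiniteDimensional K V₂]
    (a : V₃ →ₗ[K] V₄) (b : V₂ →ₗ[K] V₃) (c : V₁ →ₗ[K] V₂)
    (h : finrank K (range (a ∘ₗ b ∘ₗ c)) + finrank K (range b) =
      finrank K (range (a ∘ₗ b)) + finrank K (range (b ∘ₗ c))) :
    ∃ (x : V₂ →ₗ[K] V₁) (y : V₄ →ₗ[K] V₃), b = b ∘ₗ c ∘ₗ x + y ∘ₗ a ∘ₗ b := by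
  obtain ⟨z, hz⟩ := (a ∘ₗ b).exists_comp_comp_eq_self
  have hker : ker a ⊓ range b ≤ range (b ∘ₗ c) := by
    refine Submodule.ker_inf_le_of_finrank_map_add_eq a (range_comp_le_range c b) ?_
    rwa [← range_comp, ← range_comp]
  have hd : range (b - b ∘ₗ z ∘ₗ a ∘ₗ b) ≤ ker a ⊓ range b := by
    rintro _ ⟨v, rfl⟩
    refine ⟨?_, v - z (a (b v)), by simp⟩
    have hzv : a (b (z (a (b v)))) = a (b v) := congr($hz v)
    simp [hzv]
  obtain ⟨x, hx⟩ := exists_comp_eq_of_range_le (hd.trans hker)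
  refine ⟨x, b ∘ₗ z, ?_⟩
  rw [← comp_assoc, hx, comp_assoc, sub_add_cancel]

end

/-- If `rank(ABC) + rank(B) = rank(AB) + rank(BC)`, then there exist matrices
`X` and `Y` with `B = BCX + YAB`. -/
theorem solvable_of_frobenius_rank_eq {F : Type*} [Field F] {m n p q : ℕ}
    (A : Matrix (Fin m) (Fin n) F) (B : Matrix (Fin n) (Fin p) F)
    (C : Matrix (Fin p) (Fin q) F)
    (h : (A * B * C).rank + B.rank = (A * B).rank + (B * C).rank) :
    ∃ (X : Matrix (Fin q) (Fin p) F) (Y : Matrix (Fin n) (Fin m) F),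
      B = B * C * X + Y * (A * B) := by
  simp only [Matrix.rank] at h
  rw [Matrix.mulVecLin_mul, Matrix.mulVecLin_mul, Matrix.mulVecLin_mul, comp_assoc] at h
  obtain ⟨x, y, hxy⟩ :=
    exists_eq_comp_add_comp_of_finrank_range_eq A.mulVecLin B.mulVecLin C.mulVecLin h
  refine ⟨toMatrix' x, toMatrix' y, Matrix.toLin'.injective ?_⟩
  simp only [map_add, Matrix.toLin'_mul, Matrix.toLin'_toMatrix']
  exact hxy
end

section
/- Equality rank(ABC) + rank(B) = rank(AB) + rank(BC) holds if and only if there exist matrices X ∈ M_{q,p}(𝔽) and Y ∈ M_{n,m}(𝔽) such that B = BCX + YAB. -/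
/-!
Let `a`, `b`, `c` be the linear maps of `A`, `B`, `C`. Applying rank–nullity to `a` restricted
to `range b` and to `range (b ∘ c)` shows that the rank identity holds exactly when
`range b ⊓ ker a ≤ range (b ∘ c)`. The equation `b = b ∘ c ∘ x + y ∘ a ∘ b` says the same thing:
it forces every `b u` killed by `a` into `range (b ∘ c)`; conversely, the inclusion lets
`b` modulo `range (b ∘ c)` factor through `a ∘ b`, which produces `y`, and then
`b - y ∘ a ∘ b` lifts along `b ∘ c`, which produces `x`.
-/

open Module LinearMap

namespace LinearMap

theorem exists_comp_eq_of_range_le_s12 {R M N P : Type*} [Ring R] [AddCommGroup M] [Module R M]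
    [AddCommGroup N] [Module R N] [AddCommGroup P] [Module R P] [Projective R P]
    (f : M →ₗ[R] N) (g : P →ₗ[R] N) (hgf : range g ≤ range f) :
    ∃ h : P →ₗ[R] M, f ∘ₗ h = g := by
  obtain ⟨h, hh⟩ := projective_lifting_property f.rangeRestrict
    (g.codRestrict _ fun x => hgf (mem_range_self g x)) f.surjective_rangeRestrict
  exact ⟨h, ext fun x => congr_arg Subtype.val (LinearMap.congr_fun hh x)⟩

variable {K : Type*} [DivisionRing K]

section

variable {V W U : Type*} [AddCommGroup V] [Module K V] [AddCommGroup W] [Module K W]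
  [AddCommGroup U] [Module K U]

theorem exists_comp_eq_of_ker_le (f : V →ₗ[K] W) (g : V →ₗ[K] U) (hfg : ker f ≤ ker g) :
    ∃ h : W →ₗ[K] U, h ∘ₗ f = g := by
  obtain ⟨h, hh⟩ := exists_extend ((ker f).liftQ g hfg ∘ₗ f.quotKerEquivRange.symm.toLinearMap)
  refine ⟨h, ext fun v => ?_⟩
  simpa [quotKerEquivRange_symm_apply_image] using LinearMap.congr_fun hh ⟨f v, mem_range_self f v⟩

theorem finrank_map_add_finrank_inf_ker (f : V →ₗ[K] W) (S : Submodule K V)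
    [FiniteDimensional K S] :
    finrank K (S.map f) + finrank K ↥(S ⊓ ker f) = finrank K S := by
  have h := finrank_range_add_finrank_ker (f.domRestrict S)
  rwa [range_domRestrict, ker_domRestrict, (S.equivSubtypeMap _).finrank_eq,
    Submodule.map_comap_subtype] at h

end

section

variable {V₁ V₂ V₃ V₄ : Type*} [AddCommGroup V₁] [Module K V₁] [AddCommGroup V₂] [Module K V₂]
  [AddCommGroup V₃] [Module K V₃] [AddCommGroup V₄] [Module K V₄]
  (a : V₃ →ₗ[K] V₄) (b : V₂ →ₗ[K] V₃) (c : V₁ →ₗ[K] V₂)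

theorem frobenius_finrank_eq_iff_range_inf_ker_le [FiniteDimensional K V₃] :
    finrank K (range (a ∘ₗ b ∘ₗ c)) + finrank K (range b) =
        finrank K (range (a ∘ₗ b)) + finrank K (range (b ∘ₗ c)) ↔
      range b ⊓ ker a ≤ range (b ∘ₗ c) := by
  have hB := finrank_map_add_finrank_inf_ker a (range b)
  have hBC := finrank_map_add_finrank_inf_ker a (range (b ∘ₗ c))
  have hle : range (b ∘ₗ c) ⊓ ker a ≤ range b ⊓ ker a :=
    inf_le_inf_right _ (range_comp_le_range c b)
  rw [range_comp (b ∘ₗ c) a, range_comp b a]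
  constructor
  · intro h
    rw [← Submodule.eq_of_le_of_finrank_eq hle (by omega)]
    exact inf_le_left
  · intro h
    rw [le_antisymm hle (le_inf h inf_le_right)] at hBC
    omega

theorem exists_eq_comp_add_comp_iff_range_inf_ker_le :
    (∃ (x : V₂ →ₗ[K] V₁) (y : V₄ →ₗ[K] V₃), b = b ∘ₗ c ∘ₗ x + y ∘ₗ a ∘ₗ b) ↔
      range b ⊓ ker a ≤ range (b ∘ₗ c) := by
  constructor
  · rintro ⟨x, y, hxy⟩ _ ⟨⟨u, rfl⟩, hu⟩
    have hbu : b u = b (c (x u)) + y (a (b u)) := congr($hxy u)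
    rw [mem_ker.mp hu, map_zero, add_zero] at hbu
    exact hbu ▸ mem_range_self (b ∘ₗ c) (x u)
  · intro h
    set π := (range (b ∘ₗ c)).mkQ
    obtain ⟨z, hz⟩ := exists_comp_eq_of_ker_le (a ∘ₗ b) (π ∘ₗ b) fun u hu =>
      (Submodule.Quotient.mk_eq_zero _).mpr (h ⟨mem_range_self b u, hu⟩)
    obtain ⟨y, hy⟩ := exists_comp_eq_of_range_le_s12 π z (by rw [Submodule.range_mkQ]; exact le_top)
    obtain ⟨x, hx⟩ := exists_comp_eq_of_range_le_s12 (b ∘ₗ c) (b - y ∘ₗ a ∘ₗ b) fun _ ⟨u, hu⟩ => by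
      rw [← hu, ← Submodule.ker_mkQ (range (b ∘ₗ c)), mem_ker, sub_apply, map_sub, sub_eq_zero]
      exact (congr($hy (a (b u))).trans congr($hz u)).symm
    exact ⟨x, y, by rw [← comp_assoc, hx, sub_add_cancel]⟩

end

end LinearMap

/-- `rank(ABC) + rank(B) = rank(AB) + rank(BC)` holds if and only if there
exist matrices `X` and `Y` with `B = BCX + YAB`. -/
theorem frobenius_rank_eq_iff_solvable {F : Type*} [Field F] {m n p q : ℕ}
    (A : Matrix (Fin m) (Fin n) F) (B : Matrix (Fin n) (Fin p) F)
    (C : Matrix (Fin p) (Fin q) F) :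
    (A * B * C).rank + B.rank = (A * B).rank + (B * C).rank ↔
      ∃ (X : Matrix (Fin q) (Fin p) F) (Y : Matrix (Fin n) (Fin m) F),
        B = B * C * X + Y * (A * B) := by
  have hsolvable : (∃ (X : Matrix (Fin q) (Fin p) F) (Y : Matrix (Fin n) (Fin m) F),
      B = B * C * X + Y * (A * B)) ↔
      ∃ x y, B.mulVecLin = B.mulVecLin ∘ₗ C.mulVecLin ∘ₗ x + y ∘ₗ A.mulVecLin ∘ₗ B.mulVecLin := by
    simp only [← Matrix.toLin'_apply', Matrix.toLin'.surjective.exists, ← Matrix.toLin'_mul,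
      ← map_add, Matrix.toLin'.injective.eq_iff, Matrix.mul_assoc]
  simp only [Matrix.rank]
  rw [Matrix.mulVecLin_mul, Matrix.mulVecLin_mul, Matrix.mulVecLin_mul, comp_assoc, hsolvable,
    exists_eq_comp_add_comp_iff_range_inf_ker_le, frobenius_finrank_eq_iff_range_inf_ker_le]
end
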